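/- arXiv:2405.11709 — 3 statements merged into one kernel-verified Lean document; each statement's English description precedes it below -/
import Mathlib

section
/- For the kink solution K(x) = √(β/α) tanh(√(β/(2κ)) x) with energy E(K) = ∫_{−L}^{L} [F(K(x)) + (κ/2) K'(x)²] dx, one has E(K) = √(2κα) · K(L) · (β/α − K(L)²/3). -/
open Real Set Filter Topology MeasureTheory

/-! Writing `K x = a tanh (b x)` with `t = tanh (b x)`, the kink equations `a² = β/α`,
`2κb² = αa²` make the potential and gradient terms equal, so the energy density is
`(αa⁴/2)(1 - t²)²`. Since `(1 - t²)` is the derivative of `t` in `b x`, this has the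
antiderivative `(αa⁴/(2b))(t - t³/3)`, and `√(2κα) b = α a` turns its values at `±L` into the
claimed closed form. -/

theorem Real.hasDerivAt_tanh (x : ℝ) : HasDerivAt tanh (1 - tanh x ^ 2) x := by
  have h := (hasDerivAt_sinh x).div (hasDerivAt_cosh x) (cosh_pos x).ne'
  rw [show tanh = sinh / cosh from funext tanh_eq_sinh_div_cosh]
  refine h.congr_deriv ?_
  rw [Pi.div_apply]
  field_simp

@[fun_prop]
theorem Real.continuous_tanh : Continuous tanh :=
  continuous_iff_continuousAt.2 fun x => (hasDerivAt_tanh x).continuousAt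

theorem hasDerivAt_tanh_const_mul (b x : ℝ) :
    HasDerivAt (fun y => tanh (b * y)) (b * (1 - tanh (b * x) ^ 2)) x := by
  rw [mul_comm]
  exact (hasDerivAt_tanh (b * x)).comp x (hasDerivAt_const_mul b)

theorem hasDerivAt_tanh_sub_tanh_pow_three_div_three (b x : ℝ) :
    HasDerivAt (fun y => tanh (b * y) - tanh (b * y) ^ 3 / 3)
      (b * (1 - tanh (b * x) ^ 2) ^ 2) x := by
  have h := hasDerivAt_tanh_const_mul b x
  refine (h.fun_sub ((h.fun_pow 3).div_const 3)).congr_deriv ?_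
  ring

theorem integral_const_mul_one_sub_tanh_sq_sq (b u v : ℝ) :
    ∫ x in u..v, b * (1 - tanh (b * x) ^ 2) ^ 2
      = (tanh (b * v) - tanh (b * v) ^ 3 / 3) - (tanh (b * u) - tanh (b * u) ^ 3 / 3) := by
  refine intervalIntegral.integral_eq_sub_of_hasDerivAt
    (fun x _ => hasDerivAt_tanh_sub_tanh_pow_three_div_three b x)
    (Continuous.intervalIntegrable (by fun_prop) _ _)

theorem kink_energy_density {α β κ a b : ℝ} (ha : a ^ 2 = β / α) (hb : 2 * κ * b ^ 2 = α * a ^ 2)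
    (t : ℝ) :
    α / 4 * ((a * t) ^ 2 - β / α) ^ 2 + κ / 2 * (a * (b * (1 - t ^ 2))) ^ 2
      = α * a ^ 4 / 2 * (1 - t ^ 2) ^ 2 := by
  rw [← ha]
  linear_combination a ^ 2 * (1 - t ^ 2) ^ 2 / 4 * hb

theorem stmt_3_general (α β κ L : ℝ) (hα : 0 < α) (hβ : 0 < β) (hκ : 0 < κ)
    (F K : ℝ → ℝ)
    (hF : ∀ φ, F φ = α / 4 * (φ ^ 2 - β / α) ^ 2)
    (hK : ∀ x, K x = Real.sqrt (β / α) * Real.tanh (Real.sqrt (β / (2 * κ)) * x)) :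
    ∫ x in (-L)..L, (F (K x) + κ / 2 * (deriv K x) ^ 2)
      = Real.sqrt (2 * κ * α) * K L * (β / α - (K L) ^ 2 / 3) := by
  set a := √(β / α)
  set b := √(β / (2 * κ))
  set s := √(2 * κ * α)
  have ha : a ^ 2 = β / α := sq_sqrt (by positivity)
  have hb : 2 * κ * b ^ 2 = α * a ^ 2 := by
    rw [sq_sqrt (by positivity), ha]
    field_simp
  have hb0 : 0 < b := sqrt_pos.2 (by positivity)
  have hab : s * b = α * a := by
    rw [← sqrt_mul (by positivity), ← sqrt_sq (by positivity : 0 ≤ α * a), mul_pow, ha]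
    congr 1
    field_simp
  have hdensity : ∀ x, F (K x) + κ / 2 * deriv K x ^ 2
      = α * a ^ 4 / (2 * b) * (b * (1 - tanh (b * x) ^ 2) ^ 2) := by
    intro x
    rw [hF, funext hK, ((hasDerivAt_tanh_const_mul b x).const_mul a).deriv,
      kink_energy_density ha hb]
    field_simp
  rw [intervalIntegral.integral_congr fun x _ => hdensity x, intervalIntegral.integral_const_mul,
    integral_const_mul_one_sub_tanh_sq_sq, hK, mul_neg, tanh_neg, ← ha]
  field_simp
  linear_combination (2 * tanh (b * L) ^ 3 - 6 * tanh (b * L)) * a ^ 3 * hab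

theorem stmt_3 (α β κ L : ℝ) (hα : 0 < α) (hβ : 0 < β) (hκ : 0 < κ) (hL : 0 < L)
    (F K : ℝ → ℝ)
    (hF : ∀ φ, F φ = α / 4 * (φ ^ 2 - β / α) ^ 2)
    (hK : ∀ x, K x = Real.sqrt (β / α) * Real.tanh (Real.sqrt (β / (2 * κ)) * x)) :
    ∫ x in (-L)..L, (F (K x) + κ / 2 * (deriv K x) ^ 2)
      = Real.sqrt (2 * κ * α) * K L * (β / α - (K L) ^ 2 / 3) :=
  stmt_3_general α β κ L hα hβ hκ F K hF hK
end

section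
/- Let F ∈ C⁴(ℝ) with F'(0) = 0 and F''(0) < 0. Then the period function p(a) = 4 ∫₀^a dy / √((2/κ)(F(y) − F(a))) satisfies lim_{a → 0⁺} p(a) = 2π √(κ / (−F''(0))). -/
/-!
Uniformly for `0 ≤ y ≤ a → 0`,
`F y - F a = F''(0) / 2 * (y ^ 2 - a ^ 2) + o(a ^ 2 - y ^ 2)`: apply the mean value theorem to
`F t - F''(0) t ^ 2 / 2`, whose derivative is `o(t)` since `F'(0) = 0`. Hence the integrand of
`p a` lies between constant multiples of `1 / √(a ^ 2 - y ^ 2)`, whose integral over `[0, a]` is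
`π / 2` for every `a` (a primitive is `arcsin (y / a)`), and the constants tend to
`√(κ / -F''(0))`.
-/

open Real Set Filter Topology MeasureTheory

theorem hasDerivAt_arcsin_div {a y : ℝ} (ha : 0 < a) (hy : y ∈ Ioo (-a) a) :
    HasDerivAt (fun y => arcsin (y / a)) (1 / √(a ^ 2 - y ^ 2)) y := by
  have hya : y / a ∈ Ioo (-1) 1 := by
    constructor
    · rw [lt_div_iff₀ ha]; linarith [hy.1]
    · rw [div_lt_iff₀ ha]; linarith [hy.2]
  refine ((hasDerivAt_arcsin hya.1.ne' hya.2.ne).comp y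
    ((hasDerivAt_id y).div_const a)).congr_deriv ?_
  have hsq : a ^ 2 - y ^ 2 = a ^ 2 * (1 - (y / a) ^ 2) := by field_simp
  rw [hsq, sqrt_mul (sq_nonneg a), sqrt_sq ha.le]
  field_simp

theorem intervalIntegrable_one_div_sqrt_sq_sub_sq {a : ℝ} (ha : 0 < a) :
    IntervalIntegrable (fun y => 1 / √(a ^ 2 - y ^ 2)) volume 0 a := by
  refine intervalIntegral.intervalIntegrable_deriv_of_nonneg (g := fun y => arcsin (y / a))
    (by fun_prop) (fun y hy => hasDerivAt_arcsin_div ha ?_) (fun y _ => by positivity)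
  simp only [ha.le, min_eq_left, max_eq_right] at hy
  exact ⟨by linarith [hy.1], hy.2⟩

theorem integral_one_div_sqrt_sq_sub_sq {a : ℝ} (ha : 0 < a) :
    ∫ y in (0 : ℝ)..a, 1 / √(a ^ 2 - y ^ 2) = π / 2 := by
  rw [intervalIntegral.integral_eq_sub_of_hasDerivAt_of_le ha.le (f := fun y => arcsin (y / a))
    (by fun_prop) (fun y hy => hasDerivAt_arcsin_div ha ⟨by linarith [hy.1], hy.2⟩)
    (intervalIntegrable_one_div_sqrt_sq_sub_sq ha)]
  simp [ha.ne']

theorem one_div_sqrt_mem_Icc_of_div_le_of_le_div {q t m M : ℝ} (hM : 0 < M) (ht : 0 ≤ t)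
    (hlo : t / M ≤ q) (hhi : q ≤ t / m) :
    1 / √q ∈ Icc (√m * (1 / √t)) (√M * (1 / √t)) := by
  rcases ht.eq_or_lt with rfl | ht
  · have hq : q = 0 := le_antisymm (by simpa using hhi) (by simpa using hlo)
    simp [hq]
  have hq : 0 < q := (div_pos ht hM).trans_le hlo
  have hm : 0 < m := (div_pos_iff_of_pos_left ht).1 (hq.trans_le hhi)
  have hsqrt_div {r : ℝ} (hr : 0 < r) : √r * (1 / √t) = 1 / √(t / r) := by
    rw [sqrt_div' t hr.le, one_div_div, mul_one_div]
  rw [hsqrt_div hm, hsqrt_div hM]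
  exact ⟨one_div_le_one_div_of_le (sqrt_pos.2 hq) (sqrt_le_sqrt hhi),
    one_div_le_one_div_of_le (sqrt_pos.2 (div_pos ht hM)) (sqrt_le_sqrt hlo)⟩

theorem integral_one_div_sqrt_mem_Icc {Q : ℝ → ℝ} {a m M : ℝ} (ha : 0 < a) (hM : 0 < M)
    (hQ : Measurable Q)
    (hbounds : ∀ y ∈ Icc 0 a, (a ^ 2 - y ^ 2) / M ≤ Q y ∧ Q y ≤ (a ^ 2 - y ^ 2) / m) :
    ∫ y in (0 : ℝ)..a, 1 / √(Q y) ∈ Icc (π / 2 * √m) (π / 2 * √M) := by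
  have hpt (y) (hy : y ∈ Icc 0 a) := one_div_sqrt_mem_Icc_of_div_le_of_le_div hM
    (sub_nonneg.2 (pow_le_pow_left₀ hy.1 hy.2 2)) (hbounds y hy).1 (hbounds y hy).2
  have hint := intervalIntegrable_one_div_sqrt_sq_sub_sq ha
  have hupper := hint.const_mul √M
  have hQint : IntervalIntegrable (fun y => 1 / √(Q y)) volume 0 a := by
    refine hupper.mono_fun ((hQ.sqrt.const_div 1).aestronglyMeasurable) ?_
    filter_upwards [ae_restrict_mem measurableSet_uIoc] with y hy
    rw [uIoc_of_le ha.le] at hy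
    rw [norm_of_nonneg (by positivity), norm_of_nonneg (by positivity)]
    exact (hpt y (Ioc_subset_Icc_self hy)).2
  have hI (r : ℝ) : ∫ y in (0 : ℝ)..a, √r * (1 / √(a ^ 2 - y ^ 2)) = π / 2 * √r := by
    rw [intervalIntegral.integral_const_mul, integral_one_div_sqrt_sq_sub_sq ha, mul_comm]
  constructor
  · rw [← hI]
    exact intervalIntegral.integral_mono_on ha.le (hint.const_mul √m) hQint
      fun y hy => (hpt y hy).1
  · rw [← hI]
    exact intervalIntegral.integral_mono_on ha.le hQint hupper fun y hy => (hpt y hy).2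

theorem eventually_abs_sub_sub_le_of_hasDerivAt {F F' : ℝ → ℝ} {d ε : ℝ}
    (hF : ∀ x, HasDerivAt F (F' x) x) (hF'0 : F' 0 = 0) (hF' : HasDerivAt F' d 0) (hε : 0 < ε) :
    ∀ᶠ a in 𝓝[>] 0, ∀ y ∈ Icc 0 a,
      |F y - F a - d / 2 * (y ^ 2 - a ^ 2)| ≤ ε * (a ^ 2 - y ^ 2) := by
  obtain ⟨δ, hδ, hF'_near⟩ := Metric.eventually_nhds_iff.1
    ((hasDerivAt_iff_isLittleO_nhds_zero.1 hF').def hε)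
  filter_upwards [Ioo_mem_nhdsGT hδ] with a ha y hy
  have hR : ∀ t ∈ Icc 0 a,
      HasDerivWithinAt (fun t => F t - d / 2 * t ^ 2) (F' t - d * t) (Icc 0 a) t := by
    intro t _
    refine ((hF t).sub ((hasDerivAt_pow 2 t).const_mul (d / 2))).hasDerivWithinAt.congr_deriv ?_
    push_cast; ring
  have hR' : ∀ t ∈ Icc 0 a, ‖F' t - d * t‖ ≤ ε * a := by
    intro t ht
    have h := @hF'_near t (by rw [dist_zero_right, norm_of_nonneg ht.1]; exact ht.2.trans_lt ha.2)
    simp only [zero_add, hF'0, sub_zero, smul_eq_mul, norm_of_nonneg ht.1] at h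
    rw [mul_comm]
    exact h.trans (mul_le_mul_of_nonneg_left ht.2 hε.le)
  have hmvt := (convex_Icc 0 a).norm_image_sub_le_of_norm_hasDerivWithin_le hR hR' hy
    (right_mem_Icc.2 ha.1.le)
  rw [norm_of_nonneg (sub_nonneg.2 hy.2), Real.norm_eq_abs] at hmvt
  calc |F y - F a - d / 2 * (y ^ 2 - a ^ 2)|
      = |F a - d / 2 * a ^ 2 - (F y - d / 2 * y ^ 2)| := by rw [← abs_neg]; ring_nf
    _ ≤ ε * a * (a - y) := hmvt
    _ ≤ ε * (a ^ 2 - y ^ 2) := by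
      nlinarith [mul_nonneg (mul_nonneg hε.le (sub_nonneg.2 hy.2)) hy.1]

theorem four_mul_integral_one_div_sqrt_sub_mem_Icc {κ d ε a : ℝ} {F : ℝ → ℝ} (hκ : 0 < κ)
    (hF : Continuous F) (hε : 0 ≤ ε) (hεd : 2 * ε < -d) (ha : 0 < a)
    (hquad : ∀ y ∈ Icc 0 a, |F y - F a - d / 2 * (y ^ 2 - a ^ 2)| ≤ ε * (a ^ 2 - y ^ 2)) :
    4 * ∫ y in (0 : ℝ)..a, 1 / √((2 / κ) * (F y - F a)) ∈
      Icc (2 * π * √(κ / (-d + 2 * ε))) (2 * π * √(κ / (-d - 2 * ε))) := by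
  have hne_sub : -d - 2 * ε ≠ 0 := by linarith
  have hne_add : -d + 2 * ε ≠ 0 := by linarith
  have h := integral_one_div_sqrt_mem_Icc ha (div_pos hκ (by linarith : 0 < -d - 2 * ε))
    (m := κ / (-d + 2 * ε)) ((hF.measurable.sub_const (F a)).const_mul (2 / κ)) fun y hy => by
    have hy' := abs_le.1 (hquad y hy)
    constructor
    · calc (a ^ 2 - y ^ 2) / (κ / (-d - 2 * ε))
          = 2 / κ * ((-d / 2 - ε) * (a ^ 2 - y ^ 2)) := by field_simp
        _ ≤ 2 / κ * (F y - F a) := by gcongr; linarith [hy'.1]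
    · calc 2 / κ * (F y - F a)
          ≤ 2 / κ * ((-d / 2 + ε) * (a ^ 2 - y ^ 2)) := by gcongr; linarith [hy'.2]
        _ = (a ^ 2 - y ^ 2) / (κ / (-d + 2 * ε)) := by field_simp
  exact ⟨by linarith [h.1], by linarith [h.2]⟩

theorem tendsto_of_eventually_mem_Icc {α β ι : Type*} [TopologicalSpace β] [LinearOrder β]
    [OrderTopology β] {l : Filter α} {l' : Filter ι} [l'.NeBot] {f : α → β} {lo hi : ι → β}
    {b : β} (hlo : Tendsto lo l' (𝓝 b)) (hhi : Tendsto hi l' (𝓝 b))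
    (h : ∀ᶠ i in l', ∀ᶠ x in l, f x ∈ Icc (lo i) (hi i)) : Tendsto f l (𝓝 b) := by
  refine tendsto_order.2 ⟨fun b' hb' => ?_, fun b' hb' => ?_⟩
  · obtain ⟨i, hlt, hmem⟩ := ((hlo.eventually (lt_mem_nhds hb')).and h).exists
    exact hmem.mono fun x hx => hlt.trans_le hx.1
  · obtain ⟨i, hlt, hmem⟩ := ((hhi.eventually (gt_mem_nhds hb')).and h).exists
    exact hmem.mono fun x hx => hx.2.trans_lt hlt

theorem stmt_6_general (κ : ℝ) (hκ : 0 < κ) (F : ℝ → ℝ) (hF : ContDiff ℝ 4 F)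
    (hF'0 : deriv F 0 = 0) (hF''0 : iteratedDeriv 2 F 0 < 0)
    (p : ℝ → ℝ)
    (hp : ∀ a, p a = 4 * ∫ y in (0:ℝ)..a, 1 / Real.sqrt ((2 / κ) * (F y - F a))) :
    Tendsto p (𝓝[>] 0) (𝓝 (2 * Real.pi * Real.sqrt (κ / (-(iteratedDeriv 2 F 0))))) := by
  set d := iteratedDeriv 2 F 0 with hd
  have hF' (x : ℝ) : HasDerivAt F (deriv F x) x :=
    (hF.differentiable (by norm_num) x).hasDerivAt
  have hF'' : HasDerivAt (deriv F) d 0 := by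
    rw [hd, iteratedDeriv_succ, ← iteratedDeriv_one]
    exact (hF.differentiable_iteratedDeriv 1 (by norm_num) 0).hasDerivAt
  have hlim (s : ℝ) :
      Tendsto (fun ε => 2 * π * √(κ / (-d + s * ε))) (𝓝[>] 0) (𝓝 (2 * π * √(κ / -d))) := by
    have : ContinuousAt (fun ε => 2 * π * √(κ / (-d + s * ε))) 0 := by
      fun_prop (disch := simp; linarith)
    simpa using this.tendsto.mono_left nhdsWithin_le_nhds
  refine tendsto_of_eventually_mem_Icc (hi := fun ε => 2 * π * √(κ / (-d - 2 * ε)))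
    (hlim 2) ((hlim (-2)).congr fun ε => by ring_nf) ?_
  filter_upwards [Ioo_mem_nhdsGT (half_pos (neg_pos.2 hF''0))] with ε hε
  filter_upwards [eventually_abs_sub_sub_le_of_hasDerivAt hF' hF'0 hF'' hε.1,
    self_mem_nhdsWithin] with a hquad ha
  rw [hp]
  exact four_mul_integral_one_div_sqrt_sub_mem_Icc hκ hF.continuous hε.1.le (by linarith [hε.2])
    ha hquad

theorem stmt_6 (κ : ℝ) (hκ : 0 < κ) (F : ℝ → ℝ) (hF : ContDiff ℝ 4 F)
    (hF'0 : deriv F 0 = 0) (hF''0 : iteratedDeriv 2 F 0 < 0)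
    (hpos : ∃ ε > 0, ∀ a ∈ Ioo (0:ℝ) ε, ∀ y ∈ Ico (0:ℝ) a, F a < F y)
    (p : ℝ → ℝ)
    (hp : ∀ a, p a = 4 * ∫ y in (0:ℝ)..a, 1 / Real.sqrt ((2 / κ) * (F y - F a))) :
    Tendsto p (𝓝[>] 0) (𝓝 (2 * Real.pi * Real.sqrt (κ / (-(iteratedDeriv 2 F 0))))) :=
  stmt_6_general κ hκ F hF hF'0 hF''0 p hp
end

section
/- For a ∈ (0, √(β/α)) with δ = √(2β/(α a²) − 1) > 1, the integral ∫₀¹ (1+z²) / [(1−z²)^{1/2}(δ²−z²)^{3/2}] dz is bounded below by (1/(√2 (1+δ)^{3/2})) · 1/(δ(δ−1)). -/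
/-!
On `[0, 1]` the integrand factors as `w z * k z` with
`w z = (1 + z²) / (√(1 + z) (δ + z)^{3/2}) ≥ 1 / (√2 (1 + δ)^{3/2})` and
`k z = 1 / (√(1 - z) (δ - z)^{3/2})`. The kernel `k` is the derivative of
`2 / (1 - δ) · √(1 - z) / √(δ - z)`, so `∫₀¹ k = 2 / ((δ - 1) √δ) ≥ 1 / (δ (δ - 1))`.
-/

open Real Set MeasureTheory intervalIntegral

lemma Real.rpow_three_halves {x : ℝ} (hx : 0 ≤ x) : x ^ ((3 : ℝ) / 2) = √x * x := by
  rw [show (3 : ℝ) / 2 = 1 / 2 + 1 by norm_num, rpow_add' hx (by norm_num), rpow_one,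
    sqrt_eq_rpow]

section Kernel

variable {a b c : ℝ}

lemma hasDerivAt_sqrt_sub_div_sqrt_sub {z : ℝ} (ha : z < a) (hb : z < b) :
    HasDerivAt (fun y => √(a - y) / √(b - y))
      ((a - b) / (2 * (√(a - z) * (√(b - z) * (b - z))))) z := by
  have hA : 0 < √(a - z) := sqrt_pos.2 (sub_pos.2 ha)
  have hB : 0 < √(b - z) := sqrt_pos.2 (sub_pos.2 hb)
  have hA2 : √(a - z) ^ 2 = a - z := sq_sqrt (sub_pos.2 ha).le
  have hB2 : √(b - z) ^ 2 = b - z := sq_sqrt (sub_pos.2 hb).le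
  have hsqrt {x : ℝ} (hx : z < x) : HasDerivAt (fun y => √(x - y)) (-1 / (2 * √(x - z))) z :=
    ((hasDerivAt_id' z).const_sub x).sqrt (sub_pos.2 hx).ne'
  refine ((hsqrt ha).div (hsqrt hb) hB.ne').congr_deriv ?_
  field_simp
  rw [hA2, hB2, mul_div_cancel_left₀ _ (sub_pos.2 hb).ne']
  ring

lemma continuousOn_sqrt_sub_div_sqrt_sub (hab : a < b) :
    ContinuousOn (fun y => √(a - y) / √(b - y)) (Iic a) :=
  ContinuousOn.div (by fun_prop) (by fun_prop) fun y hy =>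
    (sqrt_pos.2 (sub_pos.2 (lt_of_le_of_lt hy hab))).ne'

lemma hasDerivAt_kernel_antideriv {z : ℝ} (hab : a < b) (hz : z < a) :
    HasDerivAt (fun y => 2 / (a - b) * (√(a - y) / √(b - y)))
      (√(a - z) * (√(b - z) * (b - z)))⁻¹ z := by
  refine ((hasDerivAt_sqrt_sub_div_sqrt_sub hz (hz.trans hab)).const_mul _).congr_deriv ?_
  have : a - b ≠ 0 := (sub_neg.2 hab).ne
  field_simp

lemma kernel_nonneg {z : ℝ} (hz : z ≤ b) : 0 ≤ (√(a - z) * (√(b - z) * (b - z)))⁻¹ := by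
  have : 0 ≤ b - z := sub_nonneg.2 hz
  positivity

lemma continuousOn_kernel_antideriv (hab : a < b) :
    ContinuousOn (fun y => 2 / (a - b) * (√(a - y) / √(b - y))) (Icc c a) :=
  (continuousOn_const.mul (continuousOn_sqrt_sub_div_sqrt_sub hab)).mono Icc_subset_Iic_self

lemma intervalIntegrable_kernel (hca : c ≤ a) (hab : a < b) :
    IntervalIntegrable (fun z => (√(a - z) * (√(b - z) * (b - z)))⁻¹) volume c a := by
  refine intervalIntegrable_deriv_of_nonneg (uIcc_of_le hca ▸ continuousOn_kernel_antideriv hab)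
    (fun z hz => hasDerivAt_kernel_antideriv hab ?_) (fun z hz => kernel_nonneg ?_)
  · exact hz.2.trans_le (max_le hca le_rfl)
  · exact (hz.2.trans_le (max_le hca le_rfl)).le.trans hab.le

lemma integral_kernel (hca : c ≤ a) (hab : a < b) :
    ∫ z in c..a, (√(a - z) * (√(b - z) * (b - z)))⁻¹ = 2 * √(a - c) / ((b - a) * √(b - c)) := by
  rw [integral_eq_sub_of_hasDerivAt_of_le hca (continuousOn_kernel_antideriv hab)
    (fun z hz => hasDerivAt_kernel_antideriv hab hz.2) (intervalIntegrable_kernel hca hab)]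
  have : a - b ≠ 0 := (sub_neg.2 hab).ne
  have : b - a ≠ 0 := (sub_pos.2 hab).ne'
  simp only [sub_self, sqrt_zero, zero_div, mul_zero, zero_sub]
  field_simp
  ring

end Kernel

section Weight

variable {δ z : ℝ}

lemma integrand_eq_weight_mul_kernel (hz₀ : 0 ≤ z) (hz₁ : z ≤ 1) (hδ : 1 ≤ δ) :
    (1 + z ^ 2) / ((1 - z ^ 2) ^ ((1 : ℝ) / 2) * (δ ^ 2 - z ^ 2) ^ ((3 : ℝ) / 2)) =
      (1 + z ^ 2) / (√(1 + z) * (√(δ + z) * (δ + z))) *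
        (√(1 - z) * (√(δ - z) * (δ - z)))⁻¹ := by
  rw [← sqrt_eq_rpow, rpow_three_halves (by nlinarith), show 1 - z ^ 2 = (1 - z) * (1 + z) by ring,
    show δ ^ 2 - z ^ 2 = (δ - z) * (δ + z) by ring, sqrt_mul (by linarith),
    sqrt_mul (by linarith)]
  field_simp

lemma one_div_le_weight (hz₀ : 0 ≤ z) (hz₁ : z ≤ 1) (hδ : 0 < δ) :
    1 / (√2 * (1 + δ) ^ ((3 : ℝ) / 2)) ≤ (1 + z ^ 2) / (√(1 + z) * (√(δ + z) * (δ + z))) := by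
  rw [rpow_three_halves (by linarith)]
  have h₁ : √(1 + z) ≤ √2 := sqrt_le_sqrt (by linarith)
  have h₂ : √(δ + z) ≤ √(1 + δ) := sqrt_le_sqrt (by linarith)
  have : 0 < √(1 + z) := sqrt_pos.2 (by linarith)
  have : 0 < √(δ + z) := sqrt_pos.2 (by linarith)
  calc 1 / (√2 * (√(1 + δ) * (1 + δ)))
      ≤ 1 / (√(1 + z) * (√(δ + z) * (δ + z))) := by
        gcongr 1 / (?_ * (?_ * ?_))
        linarith
    _ ≤ (1 + z ^ 2) / (√(1 + z) * (√(δ + z) * (δ + z))) := by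
        gcongr
        nlinarith

lemma continuousOn_weight (hδ : 0 < δ) :
    ContinuousOn (fun z => (1 + z ^ 2) / (√(1 + z) * (√(δ + z) * (δ + z)))) (Icc 0 1) := by
  refine ContinuousOn.div (by fun_prop) (by fun_prop) fun z hz => ?_
  have : 0 < 1 + z := by linarith [hz.1]
  have : 0 < δ + z := by linarith [hz.1]
  positivity

end Weight

theorem stmt_10 (δ : ℝ) (hδ : 1 < δ) :
    (1 / (Real.sqrt 2 * (1 + δ) ^ ((3:ℝ)/2))) * (1 / (δ * (δ - 1)))
      ≤ ∫ z in (0:ℝ)..1, (1 + z ^ 2) /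
          ((1 - z ^ 2) ^ ((1:ℝ)/2) * (δ ^ 2 - z ^ 2) ^ ((3:ℝ)/2)) := by
  have hδ₀ : 0 < δ := by linarith
  have h01 : (0 : ℝ) ≤ 1 := zero_le_one
  have hk := intervalIntegrable_kernel h01 hδ
  have hkernel : 1 / (δ * (δ - 1)) ≤ ∫ z in (0 : ℝ)..1, (√(1 - z) * (√(δ - z) * (δ - z)))⁻¹ := by
    rw [integral_kernel h01 hδ, sub_zero, sub_zero, sqrt_one,
      div_le_div_iff₀ (by nlinarith) (by positivity)]
    nlinarith [sqrt_le_left hδ₀.le |>.2 (by nlinarith), sub_pos.2 hδ]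
  calc 1 / (√2 * (1 + δ) ^ ((3 : ℝ) / 2)) * (1 / (δ * (δ - 1)))
      ≤ 1 / (√2 * (1 + δ) ^ ((3 : ℝ) / 2)) *
          ∫ z in (0 : ℝ)..1, (√(1 - z) * (√(δ - z) * (δ - z)))⁻¹ := by
        gcongr
    _ = ∫ z in (0 : ℝ)..1, 1 / (√2 * (1 + δ) ^ ((3 : ℝ) / 2)) *
          (√(1 - z) * (√(δ - z) * (δ - z)))⁻¹ := (intervalIntegral.integral_const_mul _ _).symm
    _ ≤ ∫ z in (0 : ℝ)..1, (1 + z ^ 2) / (√(1 + z) * (√(δ + z) * (δ + z))) *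
          (√(1 - z) * (√(δ - z) * (δ - z)))⁻¹ :=
        integral_mono_on h01 (hk.const_mul _)
          (hk.continuousOn_mul (uIcc_of_le h01 ▸ continuousOn_weight hδ₀)) fun z hz =>
            mul_le_mul_of_nonneg_right (one_div_le_weight hz.1 hz.2 hδ₀)
              (kernel_nonneg (hz.2.trans hδ.le))
    _ = _ := integral_congr fun z hz => by
        rw [uIcc_of_le h01] at hz
        exact (integrand_eq_weight_mul_kernel hz.1 hz.2 hδ.le).symm
end
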